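/- arXiv:1905.01637 — 9 statements merged into one kernel-verified Lean document; each statement's English description precedes it below -/
import Mathlib

section
/- Let X and Y be real normed spaces and f: X → Y a phase-isometry. Then for every x ∈ X, f(−x) = f(x) or f(−x) = −f(x). -/
theorem stmt_1 {X Y : Type*} [NormedAddCommGroup X] [NormedSpace ℝ X]
    [NormedAddCommGroup Y] [NormedSpace ℝ Y] (f : X → Y)
    (hf : ∀ x y : X, ({‖f x + f y‖, ‖f x - f y‖} : Set ℝ) = {‖x + y‖, ‖x - y‖}) :
    ∀ x : X, f (-x) = f x ∨ f (-x) = -f x := by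
  intro x
  have h := hf x (-x)
  have h0 : (0 : ℝ) ∈ ({‖f x + f (-x)‖, ‖f x - f (-x)‖} : Set ℝ) := by
    rw [h]
    left
    simp
  rcases h0 with h0 | h0
  · right
    have : f x + f (-x) = 0 := by
      have := norm_eq_zero.mp h0.symm
      exact this
    exact add_eq_zero_iff_eq_neg.mp (by rw [add_comm] at this; exact this)
  · left
    have : f x - f (-x) = 0 := norm_eq_zero.mp h0.symm
    exact (sub_eq_zero.mp this).symm
end

section
/- Let X and Y be real normed spaces and f: X → Y a surjective phase-isometry. Then f is injective. -/
theorem stmt_2 {X Y : Type*} [NormedAddCommGroup X] [NormedSpace ℝ X]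
    [NormedAddCommGroup Y] [NormedSpace ℝ Y] (f : X → Y)
    (hf : ∀ x y : X, ({‖f x + f y‖, ‖f x - f y‖} : Set ℝ) = {‖x + y‖, ‖x - y‖})
    (hsurj : Function.Surjective f) :
    Function.Injective f := by
  have hnorm : ∀ x : X, ‖f x‖ = ‖x‖ := by
    intro x
    have h := hf x x
    have h1 : ‖f x + f x‖ ∈ ({‖x + x‖, ‖x - x‖} : Set ℝ) := h ▸ Set.mem_insert _ _
    have h2 : ‖x + x‖ ∈ ({‖f x + f x‖, ‖f x - f x‖} : Set ℝ) := h.symm ▸ Set.mem_insert _ _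
    simp only [Set.mem_insert_iff, Set.mem_singleton_iff, sub_self, norm_zero] at h1 h2
    have e1 : ‖f x + f x‖ = 2 * ‖f x‖ := by
      rw [← two_smul ℝ, norm_smul]; simp
    have e2 : ‖x + x‖ = 2 * ‖x‖ := by
      rw [← two_smul ℝ, norm_smul]; simp
    rcases h1 with h1 | h1
    · linarith
    · rcases h2 with h2 | h2 <;> linarith
  have key : ∀ b : X, f (-b) = f b → b = 0 := by
    intro b hab
    by_contra ha
    have hfb : f b ≠ 0 := by
      intro hz
      exact ha (by simpa [hz] using (hnorm b).symm)
    obtain ⟨c, hc⟩ := hsurj (-f b)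
    have h2 := hf c b
    have h02 : (0 : ℝ) ∈ ({‖c + b‖, ‖c - b‖} : Set ℝ) := by
      have : ‖f c + f b‖ ∈ ({‖c + b‖, ‖c - b‖} : Set ℝ) := by
        rw [← h2]; exact Set.mem_insert _ _
      simpa [hc] using this
    have hfb2 : f b + f b ≠ 0 := by
      intro h3
      apply hfb
      have h4 : (2 : ℝ) • f b = 0 := by rw [two_smul]; exact h3
      rcases smul_eq_zero.mp h4 with h5 | h5
      · norm_num at h5
      · exact h5
    simp only [Set.mem_insert_iff, Set.mem_singleton_iff, eq_comm, norm_eq_zero] at h02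
    rcases h02 with hcb | hcb
    · -- c + b = 0, i.e. c = -b, so f(-b) = -f b, but f(-b) = f b
      have hc2 : c = -b := (neg_eq_of_add_eq_zero_left hcb).symm
      rw [hc2, hab] at hc
      exact hfb2 (eq_neg_iff_add_eq_zero.mp hc)
    · -- c = b, so f b = -f b
      have hc2 : c = b := by
        have := sub_eq_zero.mp hcb; exact this
      rw [hc2] at hc
      exact hfb2 (eq_neg_iff_add_eq_zero.mp hc)
  intro a b hab
  have h := hf a b
  have h0 : (0 : ℝ) ∈ ({‖a + b‖, ‖a - b‖} : Set ℝ) := by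
    have : ‖f a - f b‖ ∈ ({‖a + b‖, ‖a - b‖} : Set ℝ) := by
      rw [← h]; exact Set.mem_insert_of_mem _ rfl
    simpa [hab] using this
  simp only [Set.mem_insert_iff, Set.mem_singleton_iff, eq_comm, norm_eq_zero] at h0
  rcases h0 with hba | hba
  · -- a + b = 0, i.e. a = -b
    have ha : a = -b := (neg_eq_of_add_eq_zero_left hba).symm
    rw [ha] at hab
    have hb0 : b = 0 := key b hab
    rw [ha, hb0]; simp
  · exact sub_eq_zero.mp hba
end

section
/- Let X and Y be real normed spaces and f: X → Y a surjective phase-isometry. Then f is odd: f(−x) = −f(x) for all x ∈ X. -/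
theorem stmt_3 {X Y : Type*} [NormedAddCommGroup X] [NormedSpace ℝ X]
    [NormedAddCommGroup Y] [NormedSpace ℝ Y] (f : X → Y)
    (hf : ∀ x y : X, ({‖f x + f y‖, ‖f x - f y‖} : Set ℝ) = {‖x + y‖, ‖x - y‖})
    (hsurj : Function.Surjective f) :
    ∀ x : X, f (-x) = -f x := by
  have hnorm : ∀ x : X, ‖f x‖ = ‖x‖ := by
    intro x
    have h := hf x x
    have ha : (‖f x + f x‖ : ℝ) ∈ ({‖x + x‖, ‖x - x‖} : Set ℝ) := by
      rw [← h]; left; rfl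
    have hc : (‖x + x‖ : ℝ) ∈ ({‖f x + f x‖, ‖f x - f x‖} : Set ℝ) := by
      rw [h]; left; rfl
    have e1 : ‖x + x‖ = 2 * ‖x‖ := by
      rw [← two_smul ℝ, norm_smul]; simp
    have e2 : ‖f x + f x‖ = 2 * ‖f x‖ := by
      rw [← two_smul ℝ, norm_smul]; simp
    simp only [Set.mem_insert_iff, Set.mem_singleton_iff, sub_self, norm_zero] at ha hc
    have h1 := norm_nonneg x
    have h2 := norm_nonneg (f x)
    rcases ha with ha | ha <;> rcases hc with hc | hc <;> nlinarith
  intro x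
  obtain ⟨u, hu⟩ := hsurj (-f x)
  have h := hf x u
  have h0 : (0 : ℝ) ∈ ({‖x + u‖, ‖x - u‖} : Set ℝ) := by
    rw [← h]; left; rw [hu]; simp
  simp only [Set.mem_insert_iff, Set.mem_singleton_iff, eq_comm, norm_eq_zero,
    add_eq_zero_iff_eq_neg, sub_eq_zero] at h0
  rcases h0 with h0 | h0
  · rw [← hu, h0, neg_neg]
  · subst h0
    have hfx : f x = 0 := by
      have h2 : (2 : ℝ) • f x = 0 := by
        rw [two_smul]; nth_rewrite 2 [hu]; simp
      simpa using h2
    have hx : x = 0 := by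
      have := hnorm x
      rw [hfx, norm_zero] at this
      exact (norm_eq_zero.mp this.symm)
    subst hx
    simp [hfx]
end

section
/- Let Y be a real normed space and f: ℝ → Y a phase-isometry (not necessarily surjective). Then there exists a continuous linear functional φ ∈ Y* with ‖φ‖ = 1 such that φ(f(t)) = t or φ(f(t)) = −t, for every t ∈ ℝ. -/
/-!
A phase-isometry has `‖f t‖ = |t|` and `f (-t) = ± f t`. If `φ` is a norming functional of
`f s`, then for `0 ≤ t ≤ s` one of `‖f s ± f t‖` equals `s - t`, which forces `|φ (f t)| ≥ t`,
while `|φ (f t)| ≤ ‖f t‖ = t`; so `φ (f t) = ± t` on `[-s, s]`. Banach–Alaoglu (in the form of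
the finite intersection property of the weak-star compact unit ball) then yields a single `φ`
that works on all of `ℝ`, and `|φ (f 1)| = 1` gives `‖φ‖ = 1`.
-/

open Set

theorem StrongDual.exists_norm_le_forall_apply_mem {𝕜 E ι : Type*} [NontriviallyNormedField 𝕜]
    [ProperSpace 𝕜] [SeminormedAddCommGroup E] [NormedSpace 𝕜 E] (v : ι → E) (S : ι → Set 𝕜)
    (hS : ∀ i, IsClosed (S i)) (r : ℝ)
    (h : ∀ u : Finset ι, ∃ φ : StrongDual 𝕜 E, ‖φ‖ ≤ r ∧ ∀ i ∈ u, φ (v i) ∈ S i) :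
    ∃ φ : StrongDual 𝕜 E, ‖φ‖ ≤ r ∧ ∀ i, φ (v i) ∈ S i := by
  obtain ⟨φ, hφr, hφS⟩ :=
    (WeakDual.isCompact_closedBall (0 : StrongDual 𝕜 E) r).inter_iInter_nonempty
    (fun i ↦ {ψ : WeakDual 𝕜 E | ψ (v i) ∈ S i})
    (fun i ↦ (hS i).preimage (WeakDual.eval_continuous (v i))) fun u ↦ by
      obtain ⟨φ, hφr, hφS⟩ := h u
      exact ⟨StrongDual.toWeakDual φ, by simpa using hφr, mem_iInter₂.mpr hφS⟩
  exact ⟨WeakDual.toStrongDual φ, by simpa using hφr, mem_iInter.mp hφS⟩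

theorem StrongDual.norm_sub_norm_sub_le_apply {E : Type*} [SeminormedAddCommGroup E]
    [NormedSpace ℝ E] {φ : StrongDual ℝ E} (hφ : ‖φ‖ ≤ 1) {x : E} (hx : φ x = ‖x‖) (y : E) :
    ‖x‖ - ‖x - y‖ ≤ φ y := by
  have := (le_abs_self _).trans (φ.le_of_opNorm_le hφ (x - y))
  rw [map_sub, hx, one_mul] at this
  linarith

def IsPhaseIsometry {Y : Type*} [NormedAddCommGroup Y] (f : ℝ → Y) : Prop :=
  ∀ s t : ℝ, ({‖f s + f t‖, ‖f s - f t‖} : Set ℝ) = {|s + t|, |s - t|}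

namespace IsPhaseIsometry

variable {Y : Type*} [NormedAddCommGroup Y] {f : ℝ → Y}

theorem apply_neg (hf : IsPhaseIsometry f) (t : ℝ) : f (-t) = f t ∨ f (-t) = -f t := by
  rcases pair_eq_pair_iff.mp (hf t (-t)) with ⟨h, -⟩ | ⟨-, h⟩
  · rw [add_neg_cancel, abs_zero, norm_eq_zero, add_eq_zero_iff_eq_neg'] at h
    exact Or.inr h
  · rw [add_neg_cancel, abs_zero, norm_eq_zero, sub_eq_zero] at h
    exact Or.inl h.symm

variable [NormedSpace ℝ Y]

theorem norm_apply (hf : IsPhaseIsometry f) (t : ℝ) : ‖f t‖ = |t| := by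
  have h := pair_eq_pair_iff.mp (hf t t)
  simp only [sub_self, norm_zero, ← two_smul ℝ (f t), ← two_mul, norm_smul, abs_mul,
    Real.norm_ofNat, abs_two, abs_zero] at h
  rcases h with ⟨h, -⟩ | ⟨h, h'⟩ <;> linarith

theorem abs_apply_apply_abs (hf : IsPhaseIsometry f) (φ : StrongDual ℝ Y) (t : ℝ) :
    |φ (f |t|)| = |φ (f t)| := by
  rcases le_or_gt 0 t with ht | ht
  · rw [abs_of_nonneg ht]
  · rw [abs_of_neg ht]
    rcases hf.apply_neg t with h | h <;> simp [h]

theorem exists_abs_apply_eq_of_abs_le (hf : IsPhaseIsometry f) (s : ℝ) :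
    ∃ φ : StrongDual ℝ Y, ‖φ‖ ≤ 1 ∧ ∀ t, |t| ≤ s → |φ (f t)| = |t| := by
  obtain ⟨φ, hφ, hφs⟩ := exists_dual_vector'' ℝ (f s)
  refine ⟨φ, hφ, fun t hts ↦ ?_⟩
  rw [← hf.abs_apply_apply_abs]
  set a := |t|
  have ha : 0 ≤ a := abs_nonneg t
  have hupper : |φ (f a)| ≤ a := by
    simpa [hf.norm_apply, abs_of_nonneg ha] using φ.le_of_opNorm_le hφ (f a)
  have hlower : a ≤ |φ (f a)| := by
    have hs : ‖f s‖ = s := by rw [hf.norm_apply, abs_of_nonneg (ha.trans hts)]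
    rcases pair_eq_pair_iff.mp (hf s a) with ⟨-, h⟩ | ⟨h, -⟩
    · have := StrongDual.norm_sub_norm_sub_le_apply hφ hφs (f a)
      rw [h, hs, abs_of_nonneg (by linarith)] at this
      linarith [le_abs_self (φ (f a))]
    · have := StrongDual.norm_sub_norm_sub_le_apply hφ hφs (-f a)
      rw [sub_neg_eq_add, h, hs, abs_of_nonneg (by linarith), map_neg] at this
      linarith [neg_abs_le (φ (f a))]
  exact le_antisymm hupper hlower

end IsPhaseIsometry

theorem stmt_5 {Y : Type*} [NormedAddCommGroup Y] [NormedSpace ℝ Y] (f : ℝ → Y)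
    (hf : ∀ s t : ℝ, ({‖f s + f t‖, ‖f s - f t‖} : Set ℝ) = {|s + t|, |s - t|}) :
    ∃ φ : Y →L[ℝ] ℝ, ‖φ‖ = 1 ∧ ∀ t : ℝ, φ (f t) = t ∨ φ (f t) = -t := by
  have hf : IsPhaseIsometry f := hf
  obtain ⟨φ, hφ, hφf⟩ := StrongDual.exists_norm_le_forall_apply_mem f (fun t ↦ {a | |a| = |t|})
    (fun t ↦ isClosed_eq continuous_abs continuous_const) 1 fun u ↦ by
      obtain ⟨φ, hφ, hφf⟩ := hf.exists_abs_apply_eq_of_abs_le (∑ t ∈ u, |t|)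
      exact ⟨φ, hφ, fun t ht ↦
        hφf t (Finset.single_le_sum (fun t _ ↦ abs_nonneg t) ht)⟩
  have hφ1 : 1 ≤ ‖φ‖ := by
    have h1 : |φ (f 1)| = 1 := by simpa using hφf 1
    simpa [h1, hf.norm_apply] using φ.le_opNorm (f 1)
  exact ⟨φ, le_antisymm hφ hφ1, fun t ↦ abs_eq_abs.mp (hφf t)⟩
end

section
/- Let u be a norm-one smooth point of a real normed space X with unique supporting functional x*. Then for every x ∈ X, x*(x) = lim_{t→+∞} (‖t·u + x‖ − t). -/
open Filter

/-! The limit `p y = lim_{t → ∞} (‖t • u + y‖ - t)` exists because the expression is antitone and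
bounded below in `t`. The functional `p` is sublinear, `p ≤ ‖·‖` and `p (-u) ≤ -1`. Hahn–Banach
gives, for each `x`, a linear `ψ ≤ p` with `ψ x = p x`; any linear `ψ ≤ p` has norm one and
`ψ u = 1`, so smoothness of `u` forces `ψ = x*`, whence `x* x = p x`. -/

theorem exists_linear_le_sublinear_eq {E : Type*} [AddCommGroup E] [Module ℝ E] (N : E → ℝ)
    (N_hom : ∀ c : ℝ, 0 < c → ∀ x, N (c • x) = c * N x) (N_add : ∀ x y, N (x + y) ≤ N x + N y)
    (x : E) : ∃ g : E →ₗ[ℝ] ℝ, g x = N x ∧ ∀ y, g y ≤ N y := by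
  have N_zero : N 0 = 0 := by
    have h := N_hom 2 two_pos 0
    rw [smul_zero] at h
    linarith
  have H : ∀ c : ℝ, c • x = 0 → c • N x = 0 := by
    intro c hc
    rcases smul_eq_zero.1 hc with rfl | rfl
    · exact zero_smul ℝ _
    · rw [N_zero, smul_zero]
  let f := LinearPMap.mkSpanSingleton' (σ := RingHom.id ℝ) x (N x) H
  have hx : x ∈ f.domain := Submodule.mem_span_singleton_self x
  have hf : ∀ y : f.domain, f y ≤ N y := by
    rintro ⟨y, hy⟩
    obtain ⟨c, rfl⟩ := Submodule.mem_span_singleton.1 hy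
    rw [LinearPMap.mkSpanSingleton'_apply, RingHom.id_apply, smul_eq_mul]
    rcases lt_trichotomy c 0 with hc | rfl | hc
    · have h_neg := N_hom (-c) (neg_pos.2 hc) (-x)
      rw [neg_smul, smul_neg, neg_neg] at h_neg
      have h_sum : N 0 ≤ N x + N (-x) := by simpa using N_add x (-x)
      nlinarith
    · simp [N_zero]
    · exact (N_hom c hc x).ge
  obtain ⟨g, hg_eq, hg_le⟩ := exists_extension_of_le_sublinear f N N_hom N_add hf
  exact ⟨g, (hg_eq ⟨x, hx⟩).trans (LinearPMap.mkSpanSingleton'_apply_self x (N x) H hx), hg_le⟩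

section NormDirDeriv

variable {X : Type*} [NormedAddCommGroup X] [NormedSpace ℝ X] {u : X}

/-- For a unit vector `u`, `‖t • u + y‖ - t = (‖u + t⁻¹ • y‖ - ‖u‖) / t⁻¹`, so the limit as
`t → ∞` is the one-sided derivative of the norm at `u` in direction `y`. The expression is
antitone in `t`, so the limit is taken as an infimum. -/
noncomputable def normDirDeriv (u y : X) : ℝ :=
  ⨅ t : ℝ, (‖t • u + y‖ - t)

theorem antitone_norm_smul_add_sub (hu : ‖u‖ ≤ 1) (y : X) :
    Antitone fun t : ℝ => ‖t • u + y‖ - t := by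
  intro s t hst
  have h_split : t • u + y = (s • u + y) + (t - s) • u := by rw [sub_smul]; abel
  have h_step : ‖(t - s) • u‖ ≤ t - s := by
    rw [norm_smul, Real.norm_of_nonneg (sub_nonneg.2 hst)]
    exact mul_le_of_le_one_right (sub_nonneg.2 hst) hu
  show ‖t • u + y‖ - t ≤ ‖s • u + y‖ - s
  rw [h_split]
  linarith [norm_add_le (s • u + y) ((t - s) • u)]

theorem neg_norm_le_norm_smul_add_sub (hu : ‖u‖ = 1) (y : X) (t : ℝ) :
    -‖y‖ ≤ ‖t • u + y‖ - t := by
  have h := norm_sub_norm_le (t • u) (-y)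
  rw [sub_neg_eq_add, norm_neg, norm_smul, hu, mul_one, Real.norm_eq_abs] at h
  linarith [le_abs_self t]

theorem bddBelow_range_norm_smul_add_sub (hu : ‖u‖ = 1) (y : X) :
    BddBelow (Set.range fun t : ℝ => ‖t • u + y‖ - t) :=
  ⟨-‖y‖, by rintro - ⟨t, rfl⟩; exact neg_norm_le_norm_smul_add_sub hu y t⟩

theorem tendsto_normDirDeriv (hu : ‖u‖ = 1) (y : X) :
    Tendsto (fun t : ℝ => ‖t • u + y‖ - t) atTop (nhds (normDirDeriv u y)) :=
  tendsto_atTop_ciInf (antitone_norm_smul_add_sub hu.le y) (bddBelow_range_norm_smul_add_sub hu y)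

theorem normDirDeriv_le (hu : ‖u‖ = 1) (y : X) (t : ℝ) : normDirDeriv u y ≤ ‖t • u + y‖ - t :=
  ciInf_le (bddBelow_range_norm_smul_add_sub hu y) t

theorem normDirDeriv_le_norm (hu : ‖u‖ = 1) (y : X) : normDirDeriv u y ≤ ‖y‖ := by
  simpa using normDirDeriv_le hu y 0

theorem normDirDeriv_neg_self_le (hu : ‖u‖ = 1) : normDirDeriv u (-u) ≤ -1 := by
  simpa using normDirDeriv_le hu (-u) 1

theorem normDirDeriv_smul {c : ℝ} (hc : 0 < c) (y : X) :
    normDirDeriv u (c • y) = c * normDirDeriv u y := by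
  have h_scale : ∀ s : ℝ, ‖(c * s) • u + c • y‖ - c * s = c * (‖s • u + y‖ - s) := by
    intro s
    rw [mul_smul, ← smul_add, norm_smul, Real.norm_of_nonneg hc.le, mul_sub]
  rw [normDirDeriv, ← (Equiv.mulLeft₀ c hc.ne').iInf_comp]
  simp only [Equiv.mulLeft₀_apply, h_scale]
  rw [← Real.mul_iInf_of_nonneg hc.le, normDirDeriv]

theorem normDirDeriv_add_le (hu : ‖u‖ = 1) (y z : X) :
    normDirDeriv u (y + z) ≤ normDirDeriv u y + normDirDeriv u z := by
  refine le_ciInf_add_ciInf fun s t => (normDirDeriv_le hu _ (s + t)).trans ?_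
  have h_split : (s + t) • u + (y + z) = (s • u + y) + (t • u + z) := by rw [add_smul]; abel
  rw [h_split]
  linarith [norm_add_le (s • u + y) (t • u + z)]

theorem abs_le_norm_of_le_normDirDeriv (hu : ‖u‖ = 1) {g : X →ₗ[ℝ] ℝ}
    (hg : ∀ y, g y ≤ normDirDeriv u y) (y : X) : |g y| ≤ ‖y‖ := by
  have h_neg := (hg (-y)).trans (normDirDeriv_le_norm hu (-y))
  rw [map_neg, norm_neg] at h_neg
  exact abs_le.2 ⟨by linarith, (hg y).trans (normDirDeriv_le_norm hu y)⟩

theorem apply_self_eq_one_of_le_normDirDeriv (hu : ‖u‖ = 1) {g : X →ₗ[ℝ] ℝ}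
    (hg : ∀ y, g y ≤ normDirDeriv u y) : g u = 1 := by
  have h_le : g u ≤ 1 := hu ▸ (hg u).trans (normDirDeriv_le_norm hu u)
  have h_ge : g (-u) ≤ -1 := (hg (-u)).trans (normDirDeriv_neg_self_le hu)
  rw [map_neg] at h_ge
  linarith

theorem exists_norming_functional_apply_eq_normDirDeriv (hu : ‖u‖ = 1) (x : X) :
    ∃ ψ : X →L[ℝ] ℝ, ‖ψ‖ = 1 ∧ ψ u = 1 ∧ ψ x = normDirDeriv u x := by
  obtain ⟨g, hgx, hg_le⟩ := exists_linear_le_sublinear_eq (normDirDeriv u)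
    (fun _ hc y => normDirDeriv_smul hc y) (normDirDeriv_add_le hu) x
  have h_bound : ∀ y, ‖g y‖ ≤ 1 * ‖y‖ := fun y => by
    rw [one_mul, Real.norm_eq_abs]
    exact abs_le_norm_of_le_normDirDeriv hu hg_le y
  have hgu := apply_self_eq_one_of_le_normDirDeriv hu hg_le
  refine ⟨g.mkContinuous 1 h_bound, le_antisymm (g.mkContinuous_norm_le zero_le_one h_bound) ?_,
    hgu, hgx⟩
  simpa [hgu, hu] using (g.mkContinuous 1 h_bound).le_opNorm u

end NormDirDeriv

theorem stmt_7_general {X : Type*} [NormedAddCommGroup X] [NormedSpace ℝ X]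
    (u : X) (hu : ‖u‖ = 1) (x' : X →L[ℝ] ℝ)
    (huniq : ∀ ψ : X →L[ℝ] ℝ, ‖ψ‖ = 1 → ψ u = 1 → ψ = x') :
    ∀ x : X, Tendsto (fun t : ℝ => ‖t • u + x‖ - t) atTop (nhds (x' x)) := by
  intro x
  obtain ⟨ψ, hψ_norm, hψu, hψx⟩ := exists_norming_functional_apply_eq_normDirDeriv hu x
  rw [← huniq ψ hψ_norm hψu, hψx]
  exact tendsto_normDirDeriv hu x

theorem stmt_7 {X : Type*} [NormedAddCommGroup X] [NormedSpace ℝ X]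
    (u : X) (hu : ‖u‖ = 1) (x' : X →L[ℝ] ℝ) (hx' : ‖x'‖ = 1) (hx'u : x' u = 1)
    (huniq : ∀ ψ : X →L[ℝ] ℝ, ‖ψ‖ = 1 → ψ u = 1 → ψ = x') :
    ∀ x : X, Tendsto (fun t : ℝ => ‖t • u + x‖ - t) atTop (nhds (x' x)) :=
  stmt_7_general u hu x' huniq
end

section
/- Let X and Y be real normed spaces with X a Banach space, and let f: X → Y be a surjective phase-isometry. Then Y is a Banach space (i.e., complete). -/
open Filter

private lemma min_mem_pair {a b c d : ℝ} (h : ({a, b} : Set ℝ) = {c, d}) :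
    min a b = min c d := by
  have ha : a = c ∨ a = d := by
    have : a ∈ ({c, d} : Set ℝ) := h ▸ (by simp : a ∈ ({a, b} : Set ℝ))
    simpa using this
  have hb : b = c ∨ b = d := by
    have : b ∈ ({c, d} : Set ℝ) := h ▸ (by simp : b ∈ ({a, b} : Set ℝ))
    simpa using this
  have hc : c = a ∨ c = b := by
    have : c ∈ ({a, b} : Set ℝ) := h ▸ (by simp : c ∈ ({c, d} : Set ℝ))
    simpa using this
  have hd : d = a ∨ d = b := by
    have : d ∈ ({a, b} : Set ℝ) := h ▸ (by simp : d ∈ ({c, d} : Set ℝ))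
    simpa using this
  apply le_antisymm
  · refine le_min ?_ ?_
    · rcases hc with h' | h' <;> simp [← h', min_le_left, min_le_right]
    · rcases hd with h' | h' <;> simp [← h', min_le_left, min_le_right]
  · refine le_min ?_ ?_
    · rcases ha with h' | h' <;> simp [← h', min_le_left, min_le_right]
    · rcases hb with h' | h' <;> simp [← h', min_le_left, min_le_right]

theorem stmt_9 {X Y : Type*} [NormedAddCommGroup X] [NormedSpace ℝ X]
    [NormedAddCommGroup Y] [NormedSpace ℝ Y] [CompleteSpace X] (f : X → Y)
    (hf : ∀ x y : X, ({‖f x + f y‖, ‖f x - f y‖} : Set ℝ) = {‖x + y‖, ‖x - y‖})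
    (hsurj : Function.Surjective f) :
    CompleteSpace Y := by
  -- the min of the two norms is preserved
  have hmin : ∀ x y : X,
      min ‖f x + f y‖ ‖f x - f y‖ = min ‖x + y‖ ‖x - y‖ := fun x y =>
    min_mem_pair (hf x y)
  refine Metric.complete_of_convergent_controlled_sequences (fun n => (1/2)^n)
    (fun n => by positivity) fun u hu => ?_
  obtain ⟨g, hg⟩ := Function.surjective_iff_hasRightInverse.mp hsurj
  set x : ℕ → X := fun n => g (u n) with hxdef
  have hfx : ∀ n, f (x n) = u n := fun n => hg (u n)
  -- choose signs inductively
  let ε : ℕ → ℝ := fun n => Nat.rec 1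
    (fun k e => if ‖x (k+1) - x k‖ ≤ ‖x (k+1) + x k‖ then e else -e) n
  have hε1 : ∀ n, ε n = 1 ∨ ε n = -1 := by
    intro n
    induction n with
    | zero => left; rfl
    | succ k ih =>
      show (if ‖x (k+1) - x k‖ ≤ ‖x (k+1) + x k‖ then ε k else -ε k) = 1 ∨
        (if ‖x (k+1) - x k‖ ≤ ‖x (k+1) + x k‖ then ε k else -ε k) = -1
      split <;> rcases ih with h | h <;> simp [h]
  set z : ℕ → X := fun n => ε n • x n with hzdef
  have hznorm : ∀ n, ‖z (n+1) - z n‖ = min ‖x (n+1) + x n‖ ‖x (n+1) - x n‖ := by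
    intro n
    have hstep : ε (n+1) = if ‖x (n+1) - x n‖ ≤ ‖x (n+1) + x n‖ then ε n else -ε n := rfl
    have habs : ‖ε n‖ = 1 := by rcases hε1 n with h | h <;> simp [h]
    by_cases hc : ‖x (n+1) - x n‖ ≤ ‖x (n+1) + x n‖
    · have he : ε (n+1) = ε n := by rw [hstep, if_pos hc]
      have hz : z (n+1) - z n = ε n • (x (n+1) - x n) := by
        show ε (n+1) • x (n+1) - ε n • x n = _
        rw [he, smul_sub]
      rw [hz, norm_smul, habs, one_mul, min_eq_right hc]
    · have he : ε (n+1) = -ε n := by rw [hstep, if_neg hc]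
      have hz : z (n+1) - z n = (-ε n) • (x (n+1) + x n) := by
        show ε (n+1) • x (n+1) - ε n • x n = _
        rw [he, smul_add, neg_smul, neg_smul]
        abel
      rw [hz, norm_smul, norm_neg, habs, one_mul,
        min_eq_left (le_of_not_ge hc)]
  have hzcauchy : CauchySeq z := by
    apply cauchySeq_of_le_geometric (1/2 : ℝ) 1 (by norm_num)
    intro n
    rw [dist_eq_norm, one_mul, ← norm_neg, neg_sub]
    rw [hznorm n]
    have h1 : min ‖x (n+1) + x n‖ ‖x (n+1) - x n‖
        = min ‖u (n+1) + u n‖ ‖u (n+1) - u n‖ := by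
      rw [← hmin (x (n+1)) (x n), hfx, hfx]
    rw [h1]
    calc min ‖u (n+1) + u n‖ ‖u (n+1) - u n‖ ≤ ‖u (n+1) - u n‖ := min_le_right _ _
      _ ≤ (1/2)^n := by
          have := hu n (n+1) n (by omega) le_rfl
          rw [dist_eq_norm] at this
          exact this.le
  obtain ⟨xl, hxl⟩ := cauchySeq_tendsto_of_complete hzcauchy
  -- distance from u n to ±(f xl) is controlled
  have hδ : Tendsto (fun n => ‖z n - xl‖) atTop (nhds 0) := by
    rw [← tendsto_sub_nhds_zero_iff] at hxl
    simpa using hxl.norm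
  have hkey : ∀ n, ‖u n - f xl‖ ≤ ‖z n - xl‖ ∨ ‖u n + f xl‖ ≤ ‖z n - xl‖ := by
    intro n
    have h1 : min ‖u n + f xl‖ ‖u n - f xl‖ = min ‖x n + xl‖ ‖x n - xl‖ := by
      rw [← hmin (x n) xl, hfx]
    have h2 : min ‖x n + xl‖ ‖x n - xl‖ ≤ ‖z n - xl‖ := by
      rcases hε1 n with h | h
      · have : z n = x n := by simp [hzdef, h]
        rw [this]; exact min_le_right _ _
      · have : z n - xl = -(x n + xl) := by
          show ε n • x n - xl = _
          rw [h, neg_smul, one_smul]; abel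
        rw [this, norm_neg]; exact min_le_left _ _
      -- done
    have := h1 ▸ h2
    rcases le_total ‖u n + f xl‖ ‖u n - f xl‖ with h | h
    · right; rwa [min_eq_left h] at this
    · left; rwa [min_eq_right h] at this
  -- u is Cauchy
  have hucauchy : CauchySeq u := by
    rw [Metric.cauchySeq_iff]
    intro δ hδ'
    obtain ⟨N, hN⟩ := exists_pow_lt_of_lt_one hδ' (by norm_num : (1/2 : ℝ) < 1)
    exact ⟨N, fun m hm n hn =>
      lt_of_lt_of_le (hu N m n hm hn) hN.le⟩
  -- frequently one of the two signs works
  have hfreq : (∃ᶠ n in atTop, ‖u n - f xl‖ ≤ ‖z n - xl‖) ∨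
      (∃ᶠ n in atTop, ‖u n + f xl‖ ≤ ‖z n - xl‖) := by
    rw [← frequently_or_distrib]
    exact Frequently.of_forall hkey
  have main : ∀ s : Y, (∃ᶠ n in atTop, ‖u n - s‖ ≤ ‖z n - xl‖) →
      Tendsto u atTop (nhds s) := by
    intro s hs
    obtain ⟨φ, hφmono, hφ⟩ := extraction_of_frequently_atTop hs
    refine tendsto_nhds_of_cauchySeq_of_subseq hucauchy hφmono.tendsto_atTop ?_
    rw [← tendsto_sub_nhds_zero_iff]
    refine tendsto_zero_iff_norm_tendsto_zero.mpr ?_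
    exact squeeze_zero (fun n => norm_nonneg _) hφ
      (hδ.comp hφmono.tendsto_atTop)
  rcases hfreq with h | h
  · exact ⟨f xl, main _ h⟩
  · refine ⟨-f xl, main _ ?_⟩
    simpa [sub_neg_eq_add] using h
end

section
/- Let X and Y be real normed spaces and f: X → Y a phase-isometry. If a sequence (xₙ) converges to x in X, then there is a subsequence (x_{n_i}) such that f(x_{n_i}) converges to f(x) or to −f(x) in Y. -/
open Filter

theorem stmt_10 {X Y : Type*} [NormedAddCommGroup X] [NormedSpace ℝ X]
    [NormedAddCommGroup Y] [NormedSpace ℝ Y] (f : X → Y)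
    (hf : ∀ x y : X, ({‖f x + f y‖, ‖f x - f y‖} : Set ℝ) = {‖x + y‖, ‖x - y‖})
    (x : ℕ → X) (x₀ : X) (hx : Tendsto x atTop (nhds x₀)) :
    ∃ φ : ℕ → ℕ, StrictMono φ ∧
      (Tendsto (fun i => f (x (φ i))) atTop (nhds (f x₀)) ∨
       Tendsto (fun i => f (x (φ i))) atTop (nhds (-f x₀))) := by
  have key : ∀ n, ‖f (x n) - f x₀‖ = ‖x n - x₀‖ ∨ ‖f (x n) + f x₀‖ = ‖x n - x₀‖ := by
    intro n
    have h := hf (x n) x₀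
    have : ‖x n - x₀‖ ∈ ({‖f (x n) + f x₀‖, ‖f (x n) - f x₀‖} : Set ℝ) := by
      rw [h]; right; rfl
    rcases this with h1 | h1
    · exact Or.inr h1.symm
    · exact Or.inl h1.symm
  have hnorm : Tendsto (fun n => ‖x n - x₀‖) atTop (nhds 0) :=
    (tendsto_iff_norm_sub_tendsto_zero).mp hx
  set S : Set ℕ := {n | ‖f (x n) - f x₀‖ = ‖x n - x₀‖} with hS
  set T : Set ℕ := {n | ‖f (x n) + f x₀‖ = ‖x n - x₀‖} with hT
  have hunion : S ∪ T = Set.univ := by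
    ext n; simp only [Set.mem_union, Set.mem_univ, iff_true]
    exact key n
  have hinf : S.Infinite ∨ T.Infinite := by
    rw [← Set.infinite_union, hunion]
    exact Set.infinite_univ
  rcases hinf with hinf | hinf
  · refine ⟨Nat.nth S, Nat.nth_strictMono hinf, Or.inl ?_⟩
    rw [tendsto_iff_norm_sub_tendsto_zero]
    have hmem : ∀ i, Nat.nth S i ∈ S := fun i => Nat.nth_mem_of_infinite hinf i
    have : (fun i => ‖f (x (Nat.nth S i)) - f x₀‖) = fun i => ‖x (Nat.nth S i) - x₀‖ := by
      funext i; exact hmem i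
    rw [this]
    exact hnorm.comp ((Nat.nth_strictMono hinf).tendsto_atTop)
  · refine ⟨Nat.nth T, Nat.nth_strictMono hinf, Or.inr ?_⟩
    rw [tendsto_iff_norm_sub_tendsto_zero]
    have hmem : ∀ i, Nat.nth T i ∈ T := fun i => Nat.nth_mem_of_infinite hinf i
    have : (fun i => ‖f (x (Nat.nth T i)) - -f x₀‖) = fun i => ‖x (Nat.nth T i) - x₀‖ := by
      funext i; rw [sub_neg_eq_add]; exact hmem i
    rw [this]
    exact hnorm.comp ((Nat.nth_strictMono hinf).tendsto_atTop)
end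

section
/- Let X and Y be real normed spaces and f: X → Y a phase-isometry between them where X = ℓ¹(Γ). Then for all x, y ∈ X: x ⊥ y (Birkhoff orthogonality in ℓ¹, equivalently disjoint supports) if and only if ‖f(x)+f(y)‖ = ‖f(x)−f(y)‖ = ‖f(x)‖ + ‖f(y)‖. -/
lemma aux_abs {a b : ℝ} (h1 : |a + b| = |a| + |b|) (h2 : |a - b| = |a| + |b|) :
    a = 0 ∨ b = 0 := by
  have e1 : (a + b)^2 = (|a| + |b|)^2 := by rw [← sq_abs, h1]
  have e2 : (a - b)^2 = (|a| + |b|)^2 := by rw [← sq_abs, h2]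
  have hab : a * b = 0 := by nlinarith [sq_abs a, sq_abs b]
  exact mul_eq_zero.mp hab

lemma aux_hasSum (x : lp (fun _ : Γ => ℝ) 1) :
    HasSum (fun γ => |x γ|) ‖x‖ := by
  have := lp.hasSum_norm (p := 1) (by norm_num) x
  simpa using this

lemma norm_char {Γ : Type*} (x y : lp (fun _ : Γ => ℝ) 1) :
    (∀ γ : Γ, x γ = 0 ∨ y γ = 0) ↔ (‖x + y‖ = ‖x‖ + ‖y‖ ∧ ‖x - y‖ = ‖x‖ + ‖y‖) := by
  have hx := aux_hasSum x
  have hy := aux_hasSum y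
  have hxy := aux_hasSum (x + y)
  have hxy' := aux_hasSum (x - y)
  have hxy2 : HasSum (fun γ => |x γ + y γ|) ‖x + y‖ := by
    simpa [lp.coeFn_add, Pi.add_apply] using hxy
  have hxy2' : HasSum (fun γ => |x γ - y γ|) ‖x - y‖ := by
    simpa [lp.coeFn_sub, Pi.sub_apply] using hxy'
  constructor
  · intro h
    have e1 : ∀ γ, |x γ + y γ| = |x γ| + |y γ| := fun γ => by
      rcases h γ with h | h <;> simp [h]
    have e2 : ∀ γ, |x γ - y γ| = |x γ| + |y γ| := fun γ => by
      rcases h γ with h | h <;> simp [h, abs_sub_comm]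
    constructor
    · exact hxy2.unique (by simpa [e1] using hx.add hy)
    · exact hxy2'.unique (by simpa [e2] using hx.add hy)
  · rintro ⟨h1, h2⟩
    intro γ
    -- terms of nonneg sums with tsum zero
    have g1 : HasSum (fun γ => |x γ| + |y γ| - |x γ + y γ|) 0 := by
      have := (hx.add hy).sub hxy2
      simpa [h1] using this
    have g2 : HasSum (fun γ => |x γ| + |y γ| - |x γ - y γ|) 0 := by
      have := (hx.add hy).sub hxy2'
      simpa [h2] using this
    have nn1 : ∀ γ, 0 ≤ |x γ| + |y γ| - |x γ + y γ| := fun γ => by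
      have := abs_add_le (x γ) (y γ); linarith
    have nn2 : ∀ γ, 0 ≤ |x γ| + |y γ| - |x γ - y γ| := fun γ => by
      have := abs_sub (x γ) (y γ); linarith
    have z1 : |x γ + y γ| = |x γ| + |y γ| := by
      have hle := le_hasSum g1 γ (fun j _ => nn1 j)
      have := nn1 γ; linarith
    have z2 : |x γ - y γ| = |x γ| + |y γ| := by
      have hle := le_hasSum g2 γ (fun j _ => nn2 j)
      have := nn2 γ; linarith
    exact aux_abs z1 z2

theorem stmt_12 {Γ : Type*} {Y : Type*} [NormedAddCommGroup Y] [NormedSpace ℝ Y]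
    (f : lp (fun _ : Γ => ℝ) 1 → Y)
    (hf : ∀ x y : lp (fun _ : Γ => ℝ) 1,
      ({‖f x + f y‖, ‖f x - f y‖} : Set ℝ) = {‖x + y‖, ‖x - y‖}) :
    ∀ x y : lp (fun _ : Γ => ℝ) 1,
      (∀ γ : Γ, x γ = 0 ∨ y γ = 0) ↔
        (‖f x + f y‖ = ‖f x‖ + ‖f y‖ ∧ ‖f x - f y‖ = ‖f x‖ + ‖f y‖) := by
  -- first: ‖f x‖ = ‖x‖
  have hnorm : ∀ x, ‖f x‖ = ‖x‖ := by
    intro x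
    have h := hf x x
    simp only [sub_self, norm_zero, add_self_div_two] at h
    have h1 : ‖f x + f x‖ = 2 * ‖f x‖ := by
      rw [← two_smul ℝ (f x)]; simp [norm_smul]
    have h2 : ‖x + x‖ = 2 * ‖x‖ := by
      rw [← two_smul ℝ x]; simp [norm_smul]
    rw [h1, h2] at h
    have ha : (2 * ‖f x‖ : ℝ) = 2 * ‖x‖ ∨ (2 * ‖f x‖ : ℝ) = 0 := by
      have : (2 * ‖f x‖ : ℝ) ∈ ({2 * ‖x‖, (0:ℝ)} : Set ℝ) := by
        rw [← h]; exact Set.mem_insert _ _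
      simpa [Set.mem_insert_iff] using this
    have hb : (2 * ‖x‖ : ℝ) = 2 * ‖f x‖ ∨ (2 * ‖x‖ : ℝ) = 0 := by
      have : (2 * ‖x‖ : ℝ) ∈ ({2 * ‖f x‖, (0:ℝ)} : Set ℝ) := by
        rw [h]; exact Set.mem_insert _ _
      simpa [Set.mem_insert_iff] using this
    rcases ha with ha | ha
    · linarith
    · rcases hb with hb | hb <;> linarith
  intro x y
  rw [norm_char x y, hnorm x, hnorm y]
  have h := hf x y
  constructor
  · rintro ⟨h1, h2⟩
    rw [h1, h2] at h
    have hm : ‖f x + f y‖ ∈ ({‖x‖ + ‖y‖, ‖x‖ + ‖y‖} : Set ℝ) := by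
      rw [← h]; exact Set.mem_insert _ _
    have hm' : ‖f x - f y‖ ∈ ({‖x‖ + ‖y‖, ‖x‖ + ‖y‖} : Set ℝ) := by
      rw [← h]; exact Set.mem_insert_of_mem _ rfl
    simp at hm hm'
    exact ⟨hm, hm'⟩
  · rintro ⟨h1, h2⟩
    rw [h1, h2] at h
    have hm : ‖x + y‖ ∈ ({‖x‖ + ‖y‖, ‖x‖ + ‖y‖} : Set ℝ) := by
      rw [h]; exact Set.mem_insert _ _
    have hm' : ‖x - y‖ ∈ ({‖x‖ + ‖y‖, ‖x‖ + ‖y‖} : Set ℝ) := by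
      rw [h]; exact Set.mem_insert_of_mem _ rfl
    simp at hm hm'
    exact ⟨hm, hm'⟩
end

section
/- In a real normed space X, for nonzero x, y ∈ X, Birkhoff orthogonality x ⊥ y (‖x + t y‖ ≥ ‖x‖ for all t ∈ ℝ) holds if and only if there exists a supporting functional x* at x (i.e., ‖x*‖ = 1 and x*(x) = ‖x‖) with x*(y) = 0. -/
theorem stmt_18 {X : Type*} [NormedAddCommGroup X] [NormedSpace ℝ X]
    (x y : X) (hx : x ≠ 0) (hy : y ≠ 0) :
    (∀ t : ℝ, ‖x‖ ≤ ‖x + t • y‖) ↔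
      ∃ φ : X →L[ℝ] ℝ, ‖φ‖ = 1 ∧ φ x = ‖x‖ ∧ φ y = 0 := by
  constructor
  · intro h
    have hxn : (0:ℝ) < ‖x‖ := norm_pos_iff.mpr hx
    have hconv : Convex ℝ (Metric.ball (0:X) ‖x‖) := convex_ball 0 ‖x‖
    have hline : Convex ℝ (Set.range (fun t : ℝ => x + t • y)) := by
      rintro _ ⟨s, rfl⟩ _ ⟨t, rfl⟩ a b ha hb hab
      refine ⟨a * s + b * t, ?_⟩
      have : a • (x + s • y) + b • (x + t • y) = (a + b) • x + (a * s + b * t) • y := by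
        module
      rw [this, hab, one_smul]
    have hdisj : Disjoint (Metric.ball (0:X) ‖x‖) (Set.range (fun t : ℝ => x + t • y)) := by
      rw [Set.disjoint_left]
      rintro a ha ⟨t, rfl⟩
      rw [Metric.mem_ball, dist_zero_right] at ha
      exact absurd (h t) (not_le.mpr ha)
    obtain ⟨f, u, hball, hl⟩ :=
      geometric_hahn_banach_open hconv Metric.isOpen_ball hline hdisj
    have hu0 : (0:ℝ) < u := by
      have := hball 0 (by simpa using hxn)
      simpa using this
    have hfy : f y = 0 := by
      by_contra hne
      have ht := hl (x + ((u - f x - 1) / f y) • y) ⟨_, rfl⟩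
      rw [map_add, map_smul] at ht
      simp only [smul_eq_mul] at ht
      rw [div_mul_cancel₀ _ hne] at ht
      linarith
    have hfx : u ≤ f x := by
      have := hl x ⟨0, by simp⟩
      simpa using this
    have hcl : ∀ a ∈ Metric.closedBall (0:X) ‖x‖, f a ≤ u := by
      have hsub : Metric.closedBall (0:X) ‖x‖ ⊆ {a | f a ≤ u} := by
        rw [← closure_ball (0:X) hxn.ne']
        exact closure_minimal (fun a ha => (hball a ha).le)
          (isClosed_le f.continuous continuous_const)
      exact fun a ha => hsub ha
    have hfle : ‖f‖ ≤ u / ‖x‖ := by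
      refine f.opNorm_le_bound (div_nonneg hu0.le hxn.le) (fun z => ?_)
      rcases eq_or_ne z 0 with rfl | hz
      · simp
      · have hzn : (0:ℝ) < ‖z‖ := norm_pos_iff.mpr hz
        have hw : ((‖x‖ / ‖z‖) • z) ∈ Metric.closedBall (0:X) ‖x‖ := by
          rw [Metric.mem_closedBall, dist_zero_right, norm_smul, Real.norm_eq_abs,
            abs_of_pos (div_pos hxn hzn), div_mul_cancel₀ _ hzn.ne']
        have hw' : (-((‖x‖ / ‖z‖) • z)) ∈ Metric.closedBall (0:X) ‖x‖ := by
          simpa using hw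
        have h1 := hcl _ hw
        have h2 := hcl _ hw'
        rw [map_smul, smul_eq_mul] at h1
        rw [map_neg, map_smul, smul_eq_mul] at h2
        have e : ‖x‖ / ‖z‖ * f z * ‖z‖ = ‖x‖ * f z := by field_simp
        have h1' := mul_le_mul_of_nonneg_right h1 hzn.le
        have h2' := mul_le_mul_of_nonneg_right h2 hzn.le
        rw [e] at h1'
        rw [neg_mul, e] at h2'
        rw [Real.norm_eq_abs, abs_le]
        constructor
        · rw [neg_le, div_mul_eq_mul_div, le_div_iff₀ hxn]
          nlinarith [mul_comm (f z) ‖x‖]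
        · rw [div_mul_eq_mul_div, le_div_iff₀ hxn]
          nlinarith [mul_comm (f z) ‖x‖]
    have hfnx : ‖f‖ * ‖x‖ ≤ u := by
      calc ‖f‖ * ‖x‖ ≤ u / ‖x‖ * ‖x‖ := by nlinarith
        _ = u := div_mul_cancel₀ u hxn.ne'
    have hfxle : f x ≤ ‖f‖ * ‖x‖ := (le_abs_self _).trans (f.le_opNorm x)
    have hfxeq : f x = ‖f‖ * ‖x‖ := le_antisymm hfxle (le_trans hfnx hfx)
    have hfn0 : (0:ℝ) < ‖f‖ := by nlinarith
    refine ⟨‖f‖⁻¹ • f, ?_, ?_, ?_⟩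
    · rw [show ‖‖f‖⁻¹ • f‖ = ‖(‖f‖⁻¹ : ℝ)‖ * ‖f‖ from norm_smul _ f,
        Real.norm_eq_abs, abs_of_pos (inv_pos.mpr hfn0), inv_mul_cancel₀ hfn0.ne']
    · simp only [ContinuousLinearMap.smul_apply, smul_eq_mul, hfxeq]
      field_simp
    · simp [hfy]
  · rintro ⟨φ, hφ1, hφx, hφy⟩ t
    have heq : φ (x + t • y) = ‖x‖ := by
      rw [map_add, map_smul, hφx, hφy, smul_eq_mul, mul_zero, add_zero]
    calc ‖x‖ = φ (x + t • y) := heq.symm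
      _ ≤ ‖φ (x + t • y)‖ := le_abs_self _
      _ ≤ ‖φ‖ * ‖x + t • y‖ := φ.le_opNorm _
      _ = ‖x + t • y‖ := by rw [hφ1, one_mul]
end
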